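/- arXiv:2303.12867 — 5 statements merged into one kernel-verified Lean document; each statement's English description precedes it below -/
import Mathlib

section
/- Let N ≥ 0, g ≥ 1 and λ ∈ [0,1] be real numbers. Set a = 2N + 1, b = 2g(1 + λN) − 1, κ = 2·√(gλN(N+1)), and σ_z = [[1,0],[0,−1]]. Let V be the real 4×4 block matrix [[a·I₂, κ·σ_z],[κ·σ_z, b·I₂]] (the covariance matrix of the two-mode Gaussian state obtained by sending one half of a two-mode squeezed vacuum with local mean photon number N through the channel N_{g,λ}). Then 1 + det V + 2·det(κ·σ_z) − det(a·I₂) − det(b·I₂) = −16·N·(1+N)·g·(1 − (1−λ)g). In particular, this quantity is strictly negative whenever N > 0 and (1−λ)g < 1. -/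
open Matrix

/-- Let `N ≥ 0`, `g ≥ 1`, `λ ∈ [0,1]`. With `a = 2N+1`, `b = 2g(1+λN)−1`,
`κ = 2√(gλN(N+1))` and `σ_z = [[1,0],[0,−1]]`, the covariance matrix
`V = [[a·I₂, κ·σ_z],[κ·σ_z, b·I₂]]` of the output of `N_{g,λ}` on half of a two-mode squeezed
vacuum with local mean photon number `N` satisfies
`1 + det V + 2·det(κσ_z) − det(a·I₂) − det(b·I₂) = −16N(1+N)g(1−(1−λ)g)`; in particular this
quantity is strictly negative whenever `N > 0` and `(1−λ)g < 1`. -/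
theorem stmt2 (N g lam : ℝ) (hN : 0 ≤ N) (hg : 1 ≤ g) (hlam : lam ∈ Set.Icc (0 : ℝ) 1)
    (a b kappa : ℝ) (ha : a = 2 * N + 1) (hb : b = 2 * g * (1 + lam * N) - 1)
    (hkappa : kappa = 2 * Real.sqrt (g * lam * N * (N + 1)))
    (sz : Matrix (Fin 2) (Fin 2) ℝ) (hsz : sz = !![1, 0; 0, -1])
    (V : Matrix (Fin 2 ⊕ Fin 2) (Fin 2 ⊕ Fin 2) ℝ)
    (hV : V = Matrix.fromBlocks (a • (1 : Matrix (Fin 2) (Fin 2) ℝ)) (kappa • sz)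
      (kappa • sz) (b • (1 : Matrix (Fin 2) (Fin 2) ℝ))) :
    1 + V.det + 2 * (kappa • sz).det - (a • (1 : Matrix (Fin 2) (Fin 2) ℝ)).det
        - (b • (1 : Matrix (Fin 2) (Fin 2) ℝ)).det
      = -16 * N * (1 + N) * g * (1 - (1 - lam) * g) ∧
    (0 < N → (1 - lam) * g < 1 →
      1 + V.det + 2 * (kappa • sz).det - (a • (1 : Matrix (Fin 2) (Fin 2) ℝ)).det
          - (b • (1 : Matrix (Fin 2) (Fin 2) ℝ)).det < 0) := by
  obtain ⟨hl0, hl1⟩ := hlam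
  have hb1 : (1 : ℝ) ≤ b := by
    nlinarith [mul_nonneg (le_trans zero_le_one hg) (mul_nonneg hl0 hN)]
  have hbne : b ≠ 0 := by linarith
  have hk2 : kappa ^ 2 = 4 * (g * lam * N * (N + 1)) := by
    have hnn : 0 ≤ g * lam * N * (N + 1) := by positivity
    rw [hkappa, mul_pow, Real.sq_sqrt hnn]
    ring
  have hsz2 : sz * sz = 1 := by
    subst hsz
    rw [Matrix.one_fin_two]
    norm_num [Matrix.mul_fin_two]
  have hdetsz : sz.det = -1 := by subst hsz; simp [Matrix.det_fin_two_of]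
  have hdetk : (kappa • sz).det = -(kappa ^ 2) := by
    rw [Matrix.det_smul, hdetsz, Fintype.card_fin]
    ring
  have hdeta : (a • (1 : Matrix (Fin 2) (Fin 2) ℝ)).det = a ^ 2 := by
    rw [Matrix.det_smul]; simp [Fintype.card_fin]
  have hdetb : (b • (1 : Matrix (Fin 2) (Fin 2) ℝ)).det = b ^ 2 := by
    rw [Matrix.det_smul]; simp [Fintype.card_fin]
  have hdetD : (b • (1 : Matrix (Fin 2) (Fin 2) ℝ)).det = b ^ 2 := hdetb
  haveI : Invertible b := invertibleOfNonzero hbne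
  haveI : Invertible (b • (1 : Matrix (Fin 2) (Fin 2) ℝ)) :=
    Matrix.invertibleOfIsUnitDet _ (by rw [hdetD]; exact isUnit_iff_ne_zero.mpr (pow_ne_zero 2 hbne))
  have hDinv : (b • (1 : Matrix (Fin 2) (Fin 2) ℝ))⁻¹ = b⁻¹ • 1 := by
    rw [Matrix.inv_smul (A := (1 : Matrix (Fin 2) (Fin 2) ℝ)) b (by simp), invOf_eq_inv, inv_one]
  have hdetV : V.det = (a * b - kappa ^ 2) ^ 2 := by
    rw [hV, Matrix.det_fromBlocks₂₂, Matrix.invOf_eq_nonsing_inv, hDinv, hdetD]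
    have : (kappa • sz) * (b⁻¹ • (1 : Matrix (Fin 2) (Fin 2) ℝ)) * (kappa • sz)
        = (kappa ^ 2 * b⁻¹) • (1 : Matrix (Fin 2) (Fin 2) ℝ) := by
      simp only [Matrix.smul_mul, Matrix.mul_smul, Matrix.mul_one, hsz2, smul_smul]
      congr 1
      ring
    rw [this, ← sub_smul, Matrix.det_smul]
    simp only [Matrix.det_one, Fintype.card_fin, mul_one]
    field_simp
  have key : 1 + V.det + 2 * (kappa • sz).det - (a • (1 : Matrix (Fin 2) (Fin 2) ℝ)).det
      - (b • (1 : Matrix (Fin 2) (Fin 2) ℝ)).det = -16 * N * (1 + N) * g * (1 - (1 - lam) * g) := by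
    rw [hdetV, hdetk, hdeta, hdetb, hk2, ha, hb]
    ring
  refine ⟨key, fun hN0 hlg => ?_⟩
  rw [key]
  have h1 : 0 < 1 - (1 - lam) * g := by linarith
  nlinarith [mul_pos hN0 h1, mul_pos (mul_pos hN0 h1) (lt_of_lt_of_le one_pos hg)]
end

section
/- Let g > 1 be real, λ ∈ (0,1), M ≥ 1 an integer, and c ∈ (0,1). Consider the real 4×4 matrix R = [[c²·f_{0,0,0}(g,λ), 0, 0, 0], [0, c²·f_{0,0,M}(g,λ), c·√(1−c²)·f_{0,M,M}(g,λ), 0], [0, c·√(1−c²)·f_{M,0,0}(g,λ), (1−c²)·f_{M,M,0}(g,λ), 0], [0, 0, 0, (1−c²)·f_{M,M,M}(g,λ)]] (the partial transpose of the two-qubit state ρ^{(g,λ,M,c)} shared by Alice and Bob after the post-selection step of the entanglement distribution protocol). Then R is positive semidefinite if and only if (1 − λ)·g ≥ 1. -/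
/-!
`R` is the direct sum of two nonnegative `1 × 1` blocks and a symmetric `2 × 2` block with
positive top-left entry, so it is positive semidefinite exactly when that block has nonnegative
determinant. Every coefficient involved is a one-term sum, and the determinant condition becomes
`λ^M ≤ ((g - 1)(1 - λ))^M`, i.e. `λ ≤ (g - 1)(1 - λ)`, i.e. `(1 - λ) g ≥ 1`.
-/

open Finset

/-- The coefficient `f_{n,i,l}(g,λ)` appearing in the action of the channel
`N_{g,λ} = Φ_{g,0} ∘ E_{λ,0}` on Fock-basis matrix units:
`f_{n,i,l}(g,λ) = ∑_{m=max(i−l,0)}^{min(n,i)} (√(n!·i!·l!·(l+n−i)!)/((n−m)!·(i−m)!·m!·(l+m−i)!))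
  · (g−1)^{l+m−i} · (1−λ)^m · λ^{(n+i−2m)/2} / g^{l+1+(n−i)/2}`,
where half-integer powers are real powers of nonnegative reals and `0⁰ = 1`. -/
noncomputable def fcoef (g lam : ℝ) (n i l : ℕ) : ℝ :=
  ∑ m ∈ Finset.Icc (i - l) (min n i),
    Real.sqrt ((n.factorial * i.factorial * l.factorial * (l + n - i).factorial : ℕ)) /
        ((n - m).factorial * (i - m).factorial * m.factorial * (l + m - i).factorial : ℕ)
      * (g - 1) ^ (l + m - i) * (1 - lam) ^ m
      * lam ^ (((n : ℝ) + (i : ℝ) - 2 * (m : ℝ)) / 2)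
      / g ^ ((l : ℝ) + 1 + ((n : ℝ) - (i : ℝ)) / 2)

section MiddleBlock

open Matrix

variable {p a b d q : ℝ}

lemma dotProduct_mulVec_fin4_middle_block (x : Fin 4 → ℝ) :
    star x ⬝ᵥ (!![p, 0, 0, 0; 0, a, b, 0; 0, b, d, 0; 0, 0, 0, q] *ᵥ x) =
      p * x 0 ^ 2 + (a * x 1 ^ 2 + 2 * b * x 1 * x 2 + d * x 2 ^ 2) + q * x 3 ^ 2 := by
  simp only [dotProduct, Pi.star_apply, star_trivial, cons_mulVec, Fin.sum_univ_four,
    cons_val_zero, cons_val_one, Matrix.cons_val, empty_mulVec]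
  ring

lemma posSemidef_fin4_middle_block_iff (hp : 0 ≤ p) (hq : 0 ≤ q) (ha : 0 < a) :
    (!![p, 0, 0, 0; 0, a, b, 0; 0, b, d, 0; 0, 0, 0, q] : Matrix (Fin 4) (Fin 4) ℝ).PosSemidef ↔
      b ^ 2 ≤ a * d := by
  constructor
  · intro h
    -- the form at `(0, b, -a, 0)` is `a (a d - b²)`
    have h2 := h.dotProduct_mulVec_nonneg ![0, b, -a, 0]
    rw [dotProduct_mulVec_fin4_middle_block] at h2
    simp only [cons_val_zero, cons_val_one, Matrix.cons_val] at h2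
    nlinarith
  · intro hbad
    refine Matrix.PosSemidef.of_dotProduct_mulVec_nonneg ?_ fun x => ?_
    · ext i j
      fin_cases i <;> fin_cases j <;> simp
    · rw [dotProduct_mulVec_fin4_middle_block]
      -- `a (a x₁² + 2 b x₁ x₂ + d x₂²) = (a x₁ + b x₂)² + (a d - b²) x₂²`
      have hmid : 0 ≤ a * x 1 ^ 2 + 2 * b * x 1 * x 2 + d * x 2 ^ 2 := by
        refine nonneg_of_mul_nonneg_right ?_ ha
        nlinarith [sq_nonneg (a * x 1 + b * x 2),
          mul_nonneg (sub_nonneg.mpr hbad) (sq_nonneg (x 2))]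
      positivity

end MiddleBlock

lemma fcoef_nonneg {g lam : ℝ} (hg : 1 ≤ g) (hlam₀ : 0 ≤ lam) (hlam₁ : lam ≤ 1) (n i l : ℕ) :
    0 ≤ fcoef g lam n i l := by
  have : 0 ≤ g - 1 := sub_nonneg.mpr hg
  have : 0 ≤ 1 - lam := sub_nonneg.mpr hlam₁
  unfold fcoef
  positivity

lemma fcoef_zero_zero (g lam : ℝ) (l : ℕ) : fcoef g lam 0 0 l = (g - 1) ^ l / g ^ (l + 1) := by
  have hl : (l.factorial : ℝ) ≠ 0 := by positivity
  simp [fcoef, Real.sqrt_mul_self, hl, ← Real.rpow_natCast]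

lemma fcoef_zero_self_self (g lam : ℝ) (i : ℕ) :
    fcoef g lam 0 i i = lam ^ ((i : ℝ) / 2) / g ^ ((i : ℝ) / 2 + 1) := by
  have hi : (i.factorial : ℝ) ≠ 0 := by positivity
  rw [show (i : ℝ) / 2 + 1 = i + 1 + -i / 2 by ring]
  simp [fcoef, Real.sqrt_mul_self, hi]

lemma fcoef_self_zero_zero (g lam : ℝ) (n : ℕ) : fcoef g lam n 0 0 = fcoef g lam 0 n n := by
  have hn : (n.factorial : ℝ) ≠ 0 := by positivity
  rw [fcoef_zero_self_self, add_comm _ (1 : ℝ)]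
  simp [fcoef, Real.sqrt_mul_self, hn]

lemma fcoef_self_self_zero (g lam : ℝ) (n : ℕ) : fcoef g lam n n 0 = (1 - lam) ^ n / g := by
  have hn : (n.factorial : ℝ) ≠ 0 := by positivity
  have hexp : ((n : ℝ) + n - 2 * n) / 2 = 0 := by ring
  simp [fcoef, Real.sqrt_mul_self, hn, hexp]

lemma fcoef_zero_self_self_sq {g lam : ℝ} (hg : 0 ≤ g) (hlam : 0 ≤ lam) (i : ℕ) :
    fcoef g lam 0 i i ^ 2 = lam ^ i / g ^ (i + 2) := by
  rw [fcoef_zero_self_self, div_pow, ← Real.rpow_mul_natCast hlam, ← Real.rpow_mul_natCast hg,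
    ← Real.rpow_natCast lam, ← Real.rpow_natCast g]
  push_cast
  ring_nf

lemma pow_le_sub_one_mul_one_sub_pow_iff {g lam : ℝ} (hg : 1 ≤ g) (hlam₀ : 0 ≤ lam)
    (hlam₁ : lam ≤ 1) {M : ℕ} (hM : M ≠ 0) :
    lam ^ M ≤ ((g - 1) * (1 - lam)) ^ M ↔ 1 ≤ (1 - lam) * g := by
  have hpos : 0 ≤ (g - 1) * (1 - lam) := mul_nonneg (sub_nonneg.mpr hg) (sub_nonneg.mpr hlam₁)
  rw [pow_le_pow_iff_left₀ hlam₀ hpos hM,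
    show (g - 1) * (1 - lam) = (1 - lam) * g - 1 + lam by ring]
  constructor <;> intro h <;> linarith

/-- The partial transpose `R` of the two-qubit state `ρ^{(g,λ,M,c)}` shared by Alice and Bob
after the post-selection step of the entanglement distribution protocol is positive
semidefinite if and only if `(1−λ)g ≥ 1`. -/
theorem stmt3 (g lam : ℝ) (hg : 1 < g) (hlam : lam ∈ Set.Ioo (0 : ℝ) 1)
    (M : ℕ) (hM : 1 ≤ M) (c : ℝ) (hc : c ∈ Set.Ioo (0 : ℝ) 1)
    (R : Matrix (Fin 4) (Fin 4) ℝ)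
    (hR : R = !![c ^ 2 * fcoef g lam 0 0 0, 0, 0, 0;
      0, c ^ 2 * fcoef g lam 0 0 M, c * Real.sqrt (1 - c ^ 2) * fcoef g lam 0 M M, 0;
      0, c * Real.sqrt (1 - c ^ 2) * fcoef g lam M 0 0, (1 - c ^ 2) * fcoef g lam M M 0, 0;
      0, 0, 0, (1 - c ^ 2) * fcoef g lam M M M]) :
    R.PosSemidef ↔ (1 - lam) * g ≥ 1 := by
  obtain ⟨hlam₀, hlam₁⟩ := hlam
  obtain ⟨hc₀, hc₁⟩ := hc
  have hg₀ : 0 < g := by linarith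
  have hg₁ : 0 < g - 1 := by linarith
  have hc' : 0 < 1 - c ^ 2 := by nlinarith
  have hscale : 0 < c ^ 2 * (1 - c ^ 2) / g ^ (M + 2) := by positivity
  have hdiag : c ^ 2 * fcoef g lam 0 0 M * ((1 - c ^ 2) * fcoef g lam M M 0) =
      c ^ 2 * (1 - c ^ 2) / g ^ (M + 2) * ((g - 1) * (1 - lam)) ^ M := by
    rw [fcoef_zero_zero, fcoef_self_self_zero, mul_pow]
    field_simp
    ring
  have hoff : (c * Real.sqrt (1 - c ^ 2) * fcoef g lam 0 M M) ^ 2 =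
      c ^ 2 * (1 - c ^ 2) / g ^ (M + 2) * lam ^ M := by
    rw [mul_pow, mul_pow, Real.sq_sqrt hc'.le, fcoef_zero_self_self_sq hg₀.le hlam₀.le]
    ring
  rw [hR, fcoef_self_zero_zero g lam M,
    posSemidef_fin4_middle_block_iff
      (mul_nonneg (sq_nonneg c) (fcoef_nonneg hg.le hlam₀.le hlam₁.le 0 0 0))
      (mul_nonneg hc'.le (fcoef_nonneg hg.le hlam₀.le hlam₁.le M M M))
      (by rw [fcoef_zero_zero]; positivity),
    hoff, hdiag, mul_le_mul_iff_right₀ hscale,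
    pow_le_sub_one_mul_one_sub_pow_iff hg.le hlam₀.le hlam₁.le (by omega)]
end

section
/- Let M ≥ 1 be an integer, g > 1 real, and λ ∈ (0,1) with (1−λ)·g < 1. Set c̄ = 1/√(1 + (g−1)^M). Then c̄²·(g−1)^M + (1 − c̄²)·(1−λ)^M·g^M − 2·c̄·√(1 − c̄²)·(λg)^{M/2} < 0. (This is the inequality showing that, with the choice c = c̄, the Pauli-twirled state obtained after Step 3 of the entanglement distribution protocol remains distillable whenever the channel N_{g,λ} is not entanglement breaking.) -/
/-! With `A = (g-1)^M` the choice `c̄ = 1/√(1+A)` gives `c̄² = 1/(1+A)` and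
`c̄√(1-c̄²) = √A/(1+A)`, so the expression equals `(A + A·((1-λ)g)^M - 2√A·(λg)^{M/2})/(1+A)`.
Non-entanglement-breaking, `(1-λ)g < 1`, gives both `((1-λ)g)^M < 1` and `g - 1 < λg`, hence
`A + A·((1-λ)g)^M < 2A = 2√A·(g-1)^{M/2} < 2√A·(λg)^{M/2}`. -/

open Real

theorem sq_one_div_sqrt_one_add {a : ℝ} (ha : 0 ≤ a) : (1 / √(1 + a)) ^ 2 = 1 / (1 + a) := by
  rw [div_pow, one_pow, sq_sqrt (by linarith)]

theorem one_div_sqrt_one_add_mul_sqrt_one_sub_sq {a : ℝ} (ha : 0 ≤ a) :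
    1 / √(1 + a) * √(1 - (1 / √(1 + a)) ^ 2) = √a / (1 + a) := by
  have hpos : 0 < 1 + a := by linarith
  have hsub : 1 - 1 / (1 + a) = a / (1 + a) := by field_simp; ring
  rw [sq_one_div_sqrt_one_add ha, hsub, sqrt_div ha, div_mul_div_comm, one_mul,
    ← sq, sq_sqrt hpos.le]

theorem quadratic_form_one_div_sqrt_one_add {a : ℝ} (ha : 0 ≤ a) (b c : ℝ) :
    (1 / √(1 + a)) ^ 2 * a + (1 - (1 / √(1 + a)) ^ 2) * b
      - 2 * (1 / √(1 + a)) * √(1 - (1 / √(1 + a)) ^ 2) * c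
      = (a + a * b - 2 * √a * c) / (1 + a) := by
  have hpos : 0 < 1 + a := by linarith
  rw [mul_assoc 2, one_div_sqrt_one_add_mul_sqrt_one_sub_sq ha, sq_one_div_sqrt_one_add ha]
  field_simp
  ring

theorem add_mul_sub_two_sqrt_mul_neg {a b c : ℝ} (ha : 0 < a) (hb : b < 1) (hc : √a < c) :
    a + a * b - 2 * √a * c < 0 := by
  have hsa : 0 < √a := sqrt_pos.mpr ha
  calc a + a * b - 2 * √a * c < 2 * a - 2 * √a * c := by nlinarith
    _ = 2 * √a * (√a - c) := by rw [mul_sub, mul_assoc 2 (√a) (√a), mul_self_sqrt ha.le]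
    _ < 0 := mul_neg_of_pos_of_neg (by positivity) (by linarith)

theorem sqrt_pow_eq_rpow_half {x : ℝ} (hx : 0 ≤ x) (n : ℕ) : √(x ^ n) = x ^ ((n : ℝ) / 2) := by
  rw [sqrt_eq_rpow, ← rpow_natCast, ← rpow_mul hx, mul_one_div]

/-- Let `M ≥ 1`, `g > 1`, `λ ∈ (0,1)` with `(1−λ)g < 1`, and set
`c̄ = 1/√(1+(g−1)^M)`. Then
`c̄²(g−1)^M + (1−c̄²)(1−λ)^M g^M − 2c̄√(1−c̄²)(λg)^{M/2} < 0`: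
with the choice `c = c̄` the Pauli-twirled state obtained after Step 3 of the
entanglement distribution protocol remains distillable whenever the channel `N_{g,λ}`
is not entanglement breaking. -/
theorem stmt5 (M : ℕ) (hM : 1 ≤ M) (g lam : ℝ) (hg : 1 < g)
    (hlam : lam ∈ Set.Ioo (0 : ℝ) 1) (hEB : (1 - lam) * g < 1)
    (cbar : ℝ) (hcbar : cbar = 1 / Real.sqrt (1 + (g - 1) ^ M)) :
    cbar ^ 2 * (g - 1) ^ M + (1 - cbar ^ 2) * (1 - lam) ^ M * g ^ M
      - 2 * cbar * Real.sqrt (1 - cbar ^ 2) * (lam * g) ^ ((M : ℝ) / 2) < 0 := by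
  have hg1 : 0 < g - 1 := by linarith
  have hA : 0 < (g - 1) ^ M := pow_pos hg1 M
  have hB : ((1 - lam) * g) ^ M < 1 :=
    pow_lt_one₀ (mul_nonneg (by linarith [hlam.2]) (by linarith)) hEB (by omega)
  have hC : √((g - 1) ^ M) < (lam * g) ^ ((M : ℝ) / 2) := by
    rw [sqrt_pow_eq_rpow_half hg1.le]
    exact rpow_lt_rpow hg1.le (by linarith) (by positivity)
  rw [mul_assoc (1 - cbar ^ 2), ← mul_pow, hcbar, quadratic_form_one_div_sqrt_one_add hA.le]
  exact div_neg_of_neg_of_pos (add_mul_sub_two_sqrt_mul_neg hA hB hC) (by linarith)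
end

section
/- Let g > 1 and 0 < λ < 1 be real numbers and let N, K, F be natural numbers with K ≥ 1. Then ∑_{P=0}^{min(F,N)} C(N,P)·C(K+F−1+N−P, F−P)·( (gλ − (g−1)) / ((1−λ)(g−1)) )^P = ∑_{P=0}^{min(F,N)} C(N,P)·C(K+F−1, F−P)·( λ / ((1−λ)(g−1)) )^P. (This identity arises from equating the two expressions for the probability of detecting F total photons at the output of K parallel uses of the composition of a pure loss channel of transmissivity λ and a pure amplifier channel of gain g, applied to a K-mode Fock state with N total photons.) -/
open Finset

lemma key (y : ℝ) : ∀ (N M F : ℕ),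
    ∑ P ∈ range (F+1), (N.choose P : ℝ) * ((M+N-P).choose (F-P)) * (y-1)^P
      = ∑ P ∈ range (F+1), (N.choose P : ℝ) * (M.choose (F-P)) * y^P := by
  intro N
  induction N with
  | zero =>
    intro M F
    refine Finset.sum_congr rfl fun P hP => ?_
    rcases Nat.eq_zero_or_pos P with h | h
    · subst h; simp
    · simp [Nat.choose_eq_zero_of_lt h]
  | succ N ih =>
    intro M F
    cases F with
    | zero => simp
    | succ F =>
      set A := ∑ P ∈ range (F+1), (N.choose P : ℝ) * (M.choose (F-P)) * y^P with hA
      have hL : ∑ P ∈ range (F+1+1), ((N+1).choose P : ℝ) * ((M+(N+1)-P).choose (F+1-P)) * (y-1)^P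
          = (y-1) * A
            + ∑ P ∈ range (F+1+1), (N.choose P : ℝ) * (((M+1)+N-P).choose (F+1-P)) * (y-1)^P := by
        rw [hA, ← ih M F,
            Finset.sum_range_succ' (fun P => ((N+1).choose P : ℝ) * ((M+(N+1)-P).choose (F+1-P)) * (y-1)^P),
            Finset.sum_range_succ' (fun P => (N.choose P : ℝ) * (((M+1)+N-P).choose (F+1-P)) * (y-1)^P),
            Finset.mul_sum]
        have hQ : ∑ Q ∈ range (F+1), (((N+1).choose (Q+1) : ℝ) * ((M+(N+1)-(Q+1)).choose (F+1-(Q+1))) * (y-1)^(Q+1))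
            = ∑ Q ∈ range (F+1), ((y-1) * ((N.choose Q : ℝ) * ((M+N-Q).choose (F-Q)) * (y-1)^Q)
                + (N.choose (Q+1) : ℝ) * (((M+1)+N-(Q+1)).choose (F+1-(Q+1))) * (y-1)^(Q+1)) := by
          refine Finset.sum_congr rfl fun Q _ => ?_
          have h1 : M + (N+1) - (Q+1) = M + N - Q := by omega
          have h2 : (M+1) + N - (Q+1) = M + N - Q := by omega
          have h3 : F + 1 - (Q+1) = F - Q := by omega
          rw [h1, h2, h3, Nat.choose_succ_succ]
          push_cast
          ring
        rw [hQ, Finset.sum_add_distrib]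
        have ht : (M+(N+1)) = ((M+1)+N) := by omega
        rw [ht]
        simp only [Nat.choose_zero_right, Nat.cast_one]
        ring
      have hR : ∑ P ∈ range (F+1+1), ((N+1).choose P : ℝ) * (M.choose (F+1-P)) * y^P
          = y * A
            + ∑ P ∈ range (F+1+1), (N.choose P : ℝ) * (M.choose (F+1-P)) * y^P := by
        rw [hA,
            Finset.sum_range_succ' (fun P => ((N+1).choose P : ℝ) * (M.choose (F+1-P)) * y^P),
            Finset.sum_range_succ' (fun P => (N.choose P : ℝ) * (M.choose (F+1-P)) * y^P),
            Finset.mul_sum]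
        have hQ : ∑ Q ∈ range (F+1), (((N+1).choose (Q+1) : ℝ) * (M.choose (F+1-(Q+1))) * y^(Q+1))
            = ∑ Q ∈ range (F+1), (y * ((N.choose Q : ℝ) * (M.choose (F-Q)) * y^Q)
                + (N.choose (Q+1) : ℝ) * (M.choose (F+1-(Q+1))) * y^(Q+1)) := by
          refine Finset.sum_congr rfl fun Q _ => ?_
          have h3 : F + 1 - (Q+1) = F - Q := by omega
          rw [h3, Nat.choose_succ_succ]
          push_cast
          ring
        rw [hQ, Finset.sum_add_distrib]
        simp only [Nat.choose_zero_right, Nat.cast_one]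
        ring
      have hBC : ∑ P ∈ range (F+1+1), (N.choose P : ℝ) * (((M+1)+N-P).choose (F+1-P)) * (y-1)^P
            - ∑ P ∈ range (F+1+1), (N.choose P : ℝ) * (M.choose (F+1-P)) * y^P = A := by
        rw [ih (M+1) (F+1), ← Finset.sum_sub_distrib, Finset.sum_range_succ]
        have h0 : (N.choose (F+1) : ℝ) * ((M+1).choose (F+1-(F+1))) * y^(F+1)
            - (N.choose (F+1) : ℝ) * (M.choose (F+1-(F+1))) * y^(F+1) = 0 := by simp
        rw [h0, add_zero, hA]
        refine Finset.sum_congr rfl fun P hP => ?_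
        have hP' : P ≤ F := Nat.lt_succ_iff.mp (mem_range.mp hP)
        have h1 : F + 1 - P = (F - P) + 1 := by omega
        rw [h1, Nat.choose_succ_succ]
        push_cast
        ring
      rw [hL, hR]
      have h2 : (y-1) * A = y * A - A := by ring
      linarith [hBC]

/-- For `g > 1`, `0 < λ < 1` and naturals `N, K, F` with `K ≥ 1`,
`∑_{P=0}^{min(F,N)} C(N,P)·C(K+F−1+N−P, F−P)·((gλ−(g−1))/((1−λ)(g−1)))^P
 = ∑_{P=0}^{min(F,N)} C(N,P)·C(K+F−1, F−P)·(λ/((1−λ)(g−1)))^P`,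
the identity obtained by equating the two expressions for the total-photon-number output
distribution of `K` parallel uses of `N_{g,λ}` on a `K`-mode Fock state with `N` photons. -/
theorem stmt16 (g lam : ℝ) (hg : 1 < g) (hlam : lam ∈ Set.Ioo (0 : ℝ) 1)
    (N K F : ℕ) (hK : 1 ≤ K) :
    ∑ P ∈ Finset.range (min F N + 1),
        (N.choose P : ℝ) * ((K + F - 1 + N - P).choose (F - P))
          * ((g * lam - (g - 1)) / ((1 - lam) * (g - 1))) ^ P
      = ∑ P ∈ Finset.range (min F N + 1),
        (N.choose P : ℝ) * ((K + F - 1).choose (F - P))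
          * (lam / ((1 - lam) * (g - 1))) ^ P := by
  obtain ⟨h0, h1⟩ := hlam
  have hd1 : (1 : ℝ) - lam ≠ 0 := by linarith
  have hd2 : g - 1 ≠ 0 := by linarith
  set y := lam / ((1 - lam) * (g - 1)) with hy
  have hx : (g * lam - (g - 1)) / ((1 - lam) * (g - 1)) = y - 1 := by
    rw [hy]
    field_simp
    ring
  have hsub : Finset.range (min F N + 1) ⊆ Finset.range (F + 1) :=
    Finset.range_subset_range.mpr (by omega)
  have hzero : ∀ P, P ∈ Finset.range (F+1) → P ∉ Finset.range (min F N + 1) → N < P := by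
    intro P hP hnP
    simp only [Finset.mem_range] at hP hnP
    omega
  have e1 : ∑ P ∈ Finset.range (min F N + 1),
        (N.choose P : ℝ) * ((K + F - 1 + N - P).choose (F - P)) * (y - 1) ^ P
      = ∑ P ∈ Finset.range (F + 1),
        (N.choose P : ℝ) * (((K + F - 1) + N - P).choose (F - P)) * (y - 1) ^ P :=
    Finset.sum_subset hsub (fun P hP hnP => by
      simp [Nat.choose_eq_zero_of_lt (hzero P hP hnP)])
  have e2 : ∑ P ∈ Finset.range (min F N + 1),
        (N.choose P : ℝ) * ((K + F - 1).choose (F - P)) * y ^ P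
      = ∑ P ∈ Finset.range (F + 1),
        (N.choose P : ℝ) * ((K + F - 1).choose (F - P)) * y ^ P :=
    Finset.sum_subset hsub (fun P hP hnP => by
      simp [Nat.choose_eq_zero_of_lt (hzero P hP hnP)])
  rw [hx, e1, e2]
  exact key y N (K + F - 1) F
end

section
/- Let g > 1 and λ ∈ [0,1] be real and let N, K be natural numbers with K ≥ 1. For F ∈ ℕ define P_F = ∑_{P=0}^{min(F,N)} C(N,P)·C(K+F−1, F−P)·λ^P·(1−λ)^{N−P}·(g−1)^{F−P} / g^{K+F}. Then for every x ∈ [0,1] the series ∑_{F=0}^{∞} P_F·x^F converges and equals ( g(1−λ) + (1 + gλ − g)·x )^N / ( g − (g−1)·x )^{N+K}. In particular, taking x = 1, ∑_{F=0}^{∞} P_F = 1, so (P_F)_{F∈ℕ} is a probability distribution (the outcome distribution of a total photon number measurement at the output of K parallel uses of the channel N_{g,λ} applied to a K-mode Fock state with N total photons). -/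
/-!
Expanding `P_F x^F` over `P` and exchanging the (finite) sum over `P` with the sum over `F`,
the coefficient of each `P` is a shifted negative binomial series in `t = (g-1)x/g`:
`∑_{F ≥ P} C(K+F-1, F-P) t^(F-P) = (1-t)^{-(K+P)}`. Since `g(1-t) = g - (g-1)x`, the remaining
finite sum over `P` is a binomial expansion of `(λx + (1-λ)(g-(g-1)x))^N`, which is the numerator
of the closed form.
-/

open Finset

theorem hasSum_ite_choose_mul_pow_sub {𝕜 : Type*} [NormedField 𝕜] {t : 𝕜} (ht : ‖t‖ < 1)
    {K : ℕ} (hK : 1 ≤ K) (P : ℕ) :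
    HasSum (fun F => if P ≤ F then ((K + F - 1).choose (F - P) : 𝕜) * t ^ (F - P) else 0)
      (1 / (1 - t) ^ (K + P)) := by
  rw [← (add_left_injective P).hasSum_iff fun F hF => if_neg fun h => hF ⟨F - P, by simp [h]⟩]
  convert hasSum_choose_mul_geometric_of_norm_lt_one (K + P - 1) ht using 1
  · ext n
    rw [Function.comp_apply, if_pos (Nat.le_add_left P n), Nat.add_sub_cancel,
      show K + (n + P) - 1 = n + (K + P - 1) by omega, Nat.choose_symm_add]
  · rw [Nat.sub_add_cancel (by omega)]

noncomputable def photonCountProb (g lam : ℝ) (N K F : ℕ) : ℝ :=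
  ∑ P ∈ range (min F N + 1),
    (N.choose P : ℝ) * ((K + F - 1).choose (F - P)) * lam ^ P * (1 - lam) ^ (N - P)
      * (g - 1) ^ (F - P) / g ^ (K + F)

theorem photonCountProb_mul_pow_eq_sum {g : ℝ} (hg : g ≠ 0) (lam x : ℝ) (N K F : ℕ) :
    photonCountProb g lam N K F * x ^ F = ∑ P ∈ range (N + 1),
      (N.choose P : ℝ) * lam ^ P * (1 - lam) ^ (N - P) * x ^ P / g ^ (K + P) *
        if P ≤ F then ((K + F - 1).choose (F - P) : ℝ) * ((g - 1) * x / g) ^ (F - P) else 0 := by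
  have hrange : (range (N + 1)).filter (· ≤ F) = range (min F N + 1) := by
    ext P
    simp only [mem_filter, mem_range]
    omega
  simp only [mul_ite, mul_zero]
  rw [photonCountProb, sum_mul, sum_ite, sum_const_zero, add_zero, hrange]
  refine sum_congr rfl fun P hP => ?_
  have hPF : P ≤ F := by simp only [mem_range] at hP; omega
  obtain ⟨m, rfl⟩ := Nat.exists_eq_add_of_le hPF
  rw [Nat.add_sub_cancel_left, ← add_assoc, pow_add g, pow_add x, div_pow, mul_pow]
  field_simp

theorem hasSum_photonCountProb_mul_pow {g : ℝ} (lam x : ℝ) (hgx : |(g - 1) * x| < |g|)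
    (N : ℕ) {K : ℕ} (hK : 1 ≤ K) :
    HasSum (fun F => photonCountProb g lam N K F * x ^ F)
      ((lam * x + (1 - lam) * (g - (g - 1) * x)) ^ N / (g - (g - 1) * x) ^ (N + K)) := by
  have hg : g ≠ 0 := abs_pos.mp ((abs_nonneg _).trans_lt hgx)
  set t := (g - 1) * x / g
  have ht : ‖t‖ < 1 := by
    rwa [Real.norm_eq_abs, abs_div, div_lt_one (abs_pos.mpr hg)]
  have hsub : g * (1 - t) = g - (g - 1) * x := by rw [mul_sub, mul_one, mul_div_cancel₀ _ hg]
  simp_rw [photonCountProb_mul_pow_eq_sum hg]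
  have hval : (lam * x + (1 - lam) * (g - (g - 1) * x)) ^ N / (g - (g - 1) * x) ^ (N + K) =
      ∑ P ∈ range (N + 1), (N.choose P : ℝ) * lam ^ P * (1 - lam) ^ (N - P) * x ^ P / g ^ (K + P)
        * (1 / (1 - t) ^ (K + P)) := by
    rw [add_pow, sum_div]
    refine sum_congr rfl fun P hP => ?_
    have hPN : P ≤ N := by simp only [mem_range] at hP; omega
    have h1t : 1 - t ≠ 0 := sub_ne_zero.mpr (ne_of_lt (lt_of_abs_lt ht)).symm
    rw [← hsub, show N + K = (K + P) + (N - P) by omega, pow_add]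
    simp only [mul_pow]
    field_simp
  rw [hval]
  exact hasSum_sum fun P _ => (hasSum_ite_choose_mul_pow_sub ht hK P).mul_left _

theorem stmt17_general (g lam : ℝ) (hg : 1 < g)
    (N K : ℕ) (hK : 1 ≤ K) (Pf : ℕ → ℝ)
    (hPf : ∀ F, Pf F = ∑ P ∈ Finset.range (min F N + 1),
      (N.choose P : ℝ) * ((K + F - 1).choose (F - P)) * lam ^ P * (1 - lam) ^ (N - P)
        * (g - 1) ^ (F - P) / g ^ (K + F)) :
    (∀ x ∈ Set.Icc (0 : ℝ) 1,
      HasSum (fun F => Pf F * x ^ F)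
        ((g * (1 - lam) + (1 + g * lam - g) * x) ^ N / (g - (g - 1) * x) ^ (N + K))) ∧
    HasSum Pf 1 := by
  obtain rfl : Pf = photonCountProb g lam N K := funext hPf
  have generating : ∀ x ∈ Set.Icc (0 : ℝ) 1,
      HasSum (fun F => photonCountProb g lam N K F * x ^ F)
        ((g * (1 - lam) + (1 + g * lam - g) * x) ^ N / (g - (g - 1) * x) ^ (N + K)) := by
    rintro x ⟨hx0, hx1⟩
    have hgx : |(g - 1) * x| < |g| := by
      rw [abs_of_nonneg (by nlinarith), abs_of_pos (by linarith)]
      nlinarith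
    convert hasSum_photonCountProb_mul_pow lam x hgx N hK using 2
    ring
  refine ⟨generating, ?_⟩
  have h := generating 1 ⟨zero_le_one, le_rfl⟩
  rw [show g * (1 - lam) + (1 + g * lam - g) * 1 = 1 by ring, show g - (g - 1) * 1 = 1 by ring]
    at h
  simpa using h

/-- For `g > 1`, `λ ∈ [0,1]` and naturals `N, K` with `K ≥ 1`, let
`P_F = ∑_{P=0}^{min(F,N)} C(N,P)·C(K+F−1,F−P)·λ^P·(1−λ)^{N−P}·(g−1)^{F−P}/g^{K+F}`. Then for
every `x ∈ [0,1]` the series `∑_F P_F·x^F` converges to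
`(g(1−λ) + (1+gλ−g)x)^N / (g − (g−1)x)^{N+K}`; in particular `∑_F P_F = 1`, so `(P_F)` is a
probability distribution (the total-photon-number output distribution of `K` parallel uses of
`N_{g,λ}` on a `K`-mode Fock state with `N` photons). -/
theorem stmt17 (g lam : ℝ) (hg : 1 < g) (hlam : lam ∈ Set.Icc (0 : ℝ) 1)
    (N K : ℕ) (hK : 1 ≤ K) (Pf : ℕ → ℝ)
    (hPf : ∀ F, Pf F = ∑ P ∈ Finset.range (min F N + 1),
      (N.choose P : ℝ) * ((K + F - 1).choose (F - P)) * lam ^ P * (1 - lam) ^ (N - P)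
        * (g - 1) ^ (F - P) / g ^ (K + F)) :
    (∀ x ∈ Set.Icc (0 : ℝ) 1,
      HasSum (fun F => Pf F * x ^ F)
        ((g * (1 - lam) + (1 + g * lam - g) * x) ^ N / (g - (g - 1) * x) ^ (N + K))) ∧
    HasSum Pf 1 :=
  stmt17_general g lam hg N K hK Pf hPf
end
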